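/- Let f_Θ be an M-layer ReLU feed-forward network whose weight matrices W_1, ..., W_M each have spectral norm at most κ, and suppose the input satisfies ||x||_2 ≤ B. Then the change in network output under perturbations U_1, ..., U_M of the weights satisfies ||f_{Θ+U}(x) − f_Θ(x)||_2 ≤ e B κ^{M−1} Σ_{m=1}^{M} ||U_m||_2, provided ||U_m||_2 ≤ κ/M for all m. -/

import Mathlib

/-!
Each layer `x ↦ φ(x W)` with `‖W‖ ≤ K` is `K`-Lipschitz and multiplies norms by at most `K`,
since ReLU is `1`-Lipschitz and fixes `0`. Replacing the weights one layer at a time, the change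
caused by `U_m` is at most `‖U_m‖` times the norm of the layer's input, `≤ K^(m-1) ‖x‖`, and is
then amplified by at most `K^(M-m)` in the remaining layers; so
`‖f_{Θ+U}(x) - f_Θ(x)‖ ≤ K^(M-1) ‖x‖ ∑ ‖U_m‖`. The choice `K = (1 + 1/M) κ` bounds both
`‖W_m‖` and `‖W_m + U_m‖`, and `(1 + 1/M)^(M-1) ≤ e`.
-/

open scoped Matrix.Norms.L2Operator

/-- Coordinatewise ReLU on `ℝ^h`. -/
noncomputable def relu {h : ℕ} (v : EuclideanSpace ℝ (Fin h)) : EuclideanSpace ℝ (Fin h) :=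
  WithLp.toLp 2 (fun i => max (v i) 0)

/-- Apply the hidden layers `x ↦ φ(⋯φ(φ(x W₁) W₂)⋯)` given by a list of weight matrices. -/
noncomputable def hiddenLayers {h : ℕ} :
    List (Matrix (Fin h) (Fin h) ℝ) → EuclideanSpace ℝ (Fin h) → EuclideanSpace ℝ (Fin h)
  | [], x => x
  | W :: Ws, x => hiddenLayers Ws (relu (WithLp.toLp 2 (fun i => Matrix.vecMul (fun j => x j) W i)))

/-- An `(L+1)`-layer ReLU feed-forward network
`f_Θ(x) = φ(⋯φ(φ(x W₁) W₂)⋯ W_L) W_{L+1}` (no activation on the output layer). -/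
noncomputable def net {h L : ℕ} (W : Fin (L + 1) → Matrix (Fin h) (Fin h) ℝ)
    (x : EuclideanSpace ℝ (Fin h)) : EuclideanSpace ℝ (Fin h) :=
  WithLp.toLp 2 (fun i =>
    Matrix.vecMul
      (fun j => hiddenLayers (List.ofFn fun m : Fin L => W m.castSucc) x j)
      (W (Fin.last L)) i)

open scoped Matrix

variable {h : ℕ}

/-- Right multiplication `x ↦ x W` of row vectors, as the operator of `Wᵀ`. -/
noncomputable def rowMul (W : Matrix (Fin h) (Fin h) ℝ) :
    EuclideanSpace ℝ (Fin h) →L[ℝ] EuclideanSpace ℝ (Fin h) :=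
  Matrix.toEuclideanCLM (n := Fin h) (𝕜 := ℝ) Wᵀ

lemma toLp_vecMul_eq_rowMul (W : Matrix (Fin h) (Fin h) ℝ) (x : EuclideanSpace ℝ (Fin h)) :
    WithLp.toLp 2 (fun i => Matrix.vecMul (fun j => x j) W i) = rowMul W x := by
  ext i
  simp [rowMul, Matrix.mulVec_transpose]

lemma norm_rowMul (W : Matrix (Fin h) (Fin h) ℝ) : ‖rowMul W‖ = ‖W‖ := by
  rw [rowMul, Matrix.l2_opNorm_toEuclideanCLM, ← Matrix.conjTranspose_eq_transpose_of_trivial,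
    Matrix.l2_opNorm_conjTranspose]

lemma norm_rowMul_apply_le (W : Matrix (Fin h) (Fin h) ℝ) (x : EuclideanSpace ℝ (Fin h)) :
    ‖rowMul W x‖ ≤ ‖W‖ * ‖x‖ :=
  norm_rowMul W ▸ (rowMul W).le_opNorm x

lemma rowMul_sub (V W : Matrix (Fin h) (Fin h) ℝ) : rowMul (V - W) = rowMul V - rowMul W := by
  simp only [rowMul, Matrix.transpose_sub, map_sub]

lemma norm_relu_sub_relu_le (v w : EuclideanSpace ℝ (Fin h)) :
    ‖relu v - relu w‖ ≤ ‖v - w‖ := by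
  rw [EuclideanSpace.norm_eq, EuclideanSpace.norm_eq]
  gcongr with i
  exact abs_max_sub_max_le_abs _ _ _

lemma relu_zero : relu (0 : EuclideanSpace ℝ (Fin h)) = 0 := by
  ext i
  simp [relu]

lemma norm_relu_le (v : EuclideanSpace ℝ (Fin h)) : ‖relu v‖ ≤ ‖v‖ := by
  simpa [relu_zero] using norm_relu_sub_relu_le v 0

noncomputable def reluLayer (W : Matrix (Fin h) (Fin h) ℝ) (x : EuclideanSpace ℝ (Fin h)) :
    EuclideanSpace ℝ (Fin h) :=
  relu (rowMul W x)

lemma norm_reluLayer_le (W : Matrix (Fin h) (Fin h) ℝ) (x : EuclideanSpace ℝ (Fin h)) :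
    ‖reluLayer W x‖ ≤ ‖W‖ * ‖x‖ :=
  (norm_relu_le _).trans (norm_rowMul_apply_le W x)

lemma norm_reluLayer_sub_right_le (W : Matrix (Fin h) (Fin h) ℝ)
    (x y : EuclideanSpace ℝ (Fin h)) :
    ‖reluLayer W x - reluLayer W y‖ ≤ ‖W‖ * ‖x - y‖ :=
  calc ‖reluLayer W x - reluLayer W y‖ ≤ ‖rowMul W x - rowMul W y‖ := norm_relu_sub_relu_le _ _
    _ = ‖rowMul W (x - y)‖ := by rw [map_sub]
    _ ≤ ‖W‖ * ‖x - y‖ := norm_rowMul_apply_le W _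

lemma norm_reluLayer_sub_left_le (V W : Matrix (Fin h) (Fin h) ℝ)
    (x : EuclideanSpace ℝ (Fin h)) :
    ‖reluLayer V x - reluLayer W x‖ ≤ ‖V - W‖ * ‖x‖ :=
  calc ‖reluLayer V x - reluLayer W x‖ ≤ ‖rowMul V x - rowMul W x‖ := norm_relu_sub_relu_le _ _
    _ = ‖rowMul (V - W) x‖ := by rw [rowMul_sub, sub_apply]
    _ ≤ ‖V - W‖ * ‖x‖ := norm_rowMul_apply_le _ x

lemma hiddenLayers_ofFn_succ {n : ℕ} (W : Fin (n + 1) → Matrix (Fin h) (Fin h) ℝ)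
    (x : EuclideanSpace ℝ (Fin h)) :
    hiddenLayers (List.ofFn W) x =
      hiddenLayers (List.ofFn fun m => W m.succ) (reluLayer (W 0) x) := by
  rw [List.ofFn_succ, hiddenLayers, toLp_vecMul_eq_rowMul, reluLayer]

section Bounds

variable {K : ℝ}

lemma norm_hiddenLayers_ofFn_le {n : ℕ} (W : Fin n → Matrix (Fin h) (Fin h) ℝ)
    (hW : ∀ m, ‖W m‖ ≤ K) (x : EuclideanSpace ℝ (Fin h)) :
    ‖hiddenLayers (List.ofFn W) x‖ ≤ K ^ n * ‖x‖ := by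
  induction n generalizing x with
  | zero => simp [hiddenLayers]
  | succ n ih =>
    have hK : 0 ≤ K := (norm_nonneg _).trans (hW 0)
    rw [hiddenLayers_ofFn_succ]
    calc _ ≤ K ^ n * ‖reluLayer (W 0) x‖ := ih _ (fun m => hW _) _
      _ ≤ K ^ n * (K * ‖x‖) := by
          gcongr
          exact (norm_reluLayer_le _ x).trans (by gcongr; exact hW 0)
      _ = K ^ (n + 1) * ‖x‖ := by ring

lemma norm_hiddenLayers_ofFn_sub_le {n : ℕ} (W : Fin n → Matrix (Fin h) (Fin h) ℝ)
    (hW : ∀ m, ‖W m‖ ≤ K) (x y : EuclideanSpace ℝ (Fin h)) :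
    ‖hiddenLayers (List.ofFn W) x - hiddenLayers (List.ofFn W) y‖ ≤ K ^ n * ‖x - y‖ := by
  induction n generalizing x y with
  | zero => simp [hiddenLayers]
  | succ n ih =>
    have hK : 0 ≤ K := (norm_nonneg _).trans (hW 0)
    rw [hiddenLayers_ofFn_succ, hiddenLayers_ofFn_succ]
    calc _ ≤ K ^ n * ‖reluLayer (W 0) x - reluLayer (W 0) y‖ := ih _ (fun m => hW _) _ _
      _ ≤ K ^ n * (K * ‖x - y‖) := by
          gcongr
          exact (norm_reluLayer_sub_right_le _ x y).trans (by gcongr; exact hW 0)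
      _ = K ^ (n + 1) * ‖x - y‖ := by ring

/-- The extra factor `K` on the left is the amplification by the output layer, applied later. -/
lemma mul_norm_hiddenLayers_ofFn_sub_le {n : ℕ} (V W : Fin n → Matrix (Fin h) (Fin h) ℝ)
    (hV : ∀ m, ‖V m‖ ≤ K) (hW : ∀ m, ‖W m‖ ≤ K) (x : EuclideanSpace ℝ (Fin h)) :
    K * ‖hiddenLayers (List.ofFn V) x - hiddenLayers (List.ofFn W) x‖ ≤
      K ^ n * ‖x‖ * ∑ m, ‖V m - W m‖ := by
  induction n generalizing x with
  | zero => simp [hiddenLayers]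
  | succ n ih =>
    have hK : 0 ≤ K := (norm_nonneg _).trans (hW 0)
    set HV := hiddenLayers (List.ofFn fun m => V m.succ)
    set HW := hiddenLayers (List.ofFn fun m => W m.succ)
    set y := reluLayer (V 0) x
    set z := reluLayer (W 0) x
    have hy : ‖y‖ ≤ K * ‖x‖ := (norm_reluLayer_le _ x).trans (by gcongr; exact hV 0)
    have hyz : K * ‖HW y - HW z‖ ≤ K ^ (n + 1) * ‖x‖ * ‖V 0 - W 0‖ :=
      calc K * ‖HW y - HW z‖ ≤ K * (K ^ n * (‖V 0 - W 0‖ * ‖x‖)) := by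
            gcongr
            exact (norm_hiddenLayers_ofFn_sub_le _ (fun m => hW _) y z).trans
              (by gcongr; exact norm_reluLayer_sub_left_le _ _ x)
        _ = K ^ (n + 1) * ‖x‖ * ‖V 0 - W 0‖ := by ring
    have hrest : K * ‖HV y - HW y‖ ≤ K ^ (n + 1) * ‖x‖ * ∑ m : Fin n, ‖V m.succ - W m.succ‖ :=
      calc K * ‖HV y - HW y‖ ≤ K ^ n * ‖y‖ * ∑ m : Fin n, ‖V m.succ - W m.succ‖ :=
            ih _ _ (fun m => hV _) (fun m => hW _) y
        _ ≤ K ^ n * (K * ‖x‖) * ∑ m : Fin n, ‖V m.succ - W m.succ‖ := by gcongr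
        _ = K ^ (n + 1) * ‖x‖ * ∑ m : Fin n, ‖V m.succ - W m.succ‖ := by ring
    rw [hiddenLayers_ofFn_succ, hiddenLayers_ofFn_succ, Fin.sum_univ_succ]
    calc K * ‖HV y - HW z‖ ≤ K * ‖HV y - HW y‖ + K * ‖HW y - HW z‖ := by
          rw [← mul_add]; gcongr; exact norm_sub_le_norm_sub_add_norm_sub _ _ _
      _ ≤ _ := by linarith

lemma net_eq_rowMul_hiddenLayers {L : ℕ} (W : Fin (L + 1) → Matrix (Fin h) (Fin h) ℝ)
    (x : EuclideanSpace ℝ (Fin h)) :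
    net W x = rowMul (W (Fin.last L)) (hiddenLayers (List.ofFn fun m : Fin L => W m.castSucc) x) :=
  toLp_vecMul_eq_rowMul _ _

lemma norm_net_sub_net_le {L : ℕ} (V W : Fin (L + 1) → Matrix (Fin h) (Fin h) ℝ)
    (hV : ∀ m, ‖V m‖ ≤ K) (hW : ∀ m, ‖W m‖ ≤ K) (x : EuclideanSpace ℝ (Fin h)) :
    ‖net V x - net W x‖ ≤ K ^ L * ‖x‖ * ∑ m, ‖V m - W m‖ := by
  set y := hiddenLayers (List.ofFn fun m : Fin L => V m.castSucc) x
  set z := hiddenLayers (List.ofFn fun m : Fin L => W m.castSucc) x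
  have hyz := mul_norm_hiddenLayers_ofFn_sub_le _ _ (fun m => hV m.castSucc)
    (fun m => hW m.castSucc) x
  have hz : ‖z‖ ≤ K ^ L * ‖x‖ := norm_hiddenLayers_ofFn_le _ (fun m => hW _) x
  have hsplit : net V x - net W x = rowMul (V (Fin.last L)) (y - z) +
      rowMul (V (Fin.last L) - W (Fin.last L)) z := by
    rw [net_eq_rowMul_hiddenLayers, net_eq_rowMul_hiddenLayers, rowMul_sub, map_sub,
      sub_apply]
    abel
  rw [hsplit, Fin.sum_univ_castSucc]
  calc _ ≤ ‖V (Fin.last L)‖ * ‖y - z‖ + ‖V (Fin.last L) - W (Fin.last L)‖ * ‖z‖ :=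
        (norm_add_le _ _).trans (add_le_add (norm_rowMul_apply_le _ _) (norm_rowMul_apply_le _ _))
    _ ≤ K * ‖y - z‖ + ‖V (Fin.last L) - W (Fin.last L)‖ * (K ^ L * ‖x‖) := by
        gcongr
        exact hV _
    _ ≤ _ := by linarith

end Bounds

theorem stmt15 (h L : ℕ) (κ B : ℝ)
    (W U : Fin (L + 1) → Matrix (Fin h) (Fin h) ℝ)
    (hW : ∀ m, ‖W m‖ ≤ κ)
    (hU : ∀ m, ‖U m‖ ≤ κ / (L + 1))
    (x : EuclideanSpace ℝ (Fin h)) (hx : ‖x‖ ≤ B) :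
    ‖net (fun m => W m + U m) x - net W x‖ ≤
      Real.exp 1 * B * κ ^ L * ∑ m, ‖U m‖ := by
  have hκ : 0 ≤ κ := (norm_nonneg _).trans (hW 0)
  set δ : ℝ := ((L : ℝ) + 1)⁻¹
  have hδκ : 0 ≤ δ * κ := by positivity
  have hWU : ∀ m, ‖W m + U m‖ ≤ (1 + δ) * κ := fun m =>
    (norm_add_le _ _).trans (by linarith [hW m, hU m, div_eq_inv_mul κ ((L : ℝ) + 1)])
  have hW' : ∀ m, ‖W m‖ ≤ (1 + δ) * κ := fun m => by linarith [hW m]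
  have hexp : (1 + δ) ^ L ≤ Real.exp 1 :=
    calc (1 + δ) ^ L ≤ (1 + δ) ^ (L + 1) := pow_le_pow_right₀ (le_add_of_nonneg_right (by positivity)) L.le_succ
      _ ≤ Real.exp 1 := by simpa [δ] using Real.one_add_inv_pow_le_exp (n := L + 1)
  calc _ ≤ ((1 + δ) * κ) ^ L * ‖x‖ * ∑ m, ‖W m + U m - W m‖ := norm_net_sub_net_le _ _ hWU hW' x
    _ = (1 + δ) ^ L * κ ^ L * ‖x‖ * ∑ m, ‖U m‖ := by simp only [add_sub_cancel_left, mul_pow]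
    _ ≤ Real.exp 1 * κ ^ L * B * ∑ m, ‖U m‖ := by gcongr
    _ = Real.exp 1 * B * κ ^ L * ∑ m, ‖U m‖ := by ring
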